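/- For m ≥ 5, let H = K_{m,m} \ E(C_{2m}) and let W be a resolving set of H. Then along the cycle C_{2m}, between any two cyclically consecutive vertices of W there are at most four vertices not in W (every gap of W contains at most four vertices). -/

import Mathlib

/-!
Five cyclically consecutive vertices `v₀, …, v₄` outside `W` are impossible. In `H` every
vertex is adjacent to the whole opposite side except its two cycle neighbours, and for `m ≥ 5`
two distinct vertices on the same side have a common neighbour, hence are at distance 2. So
`v₁` and `v₃` are both at distance 2 from every other vertex of their side, and both at distance 1
from every vertex of the opposite side other than `v₀, v₂, v₄`: nothing in `W` separates them.
-/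

/-- `W` resolves `G`: every vertex is determined by its distance vector to `W`. -/
def Resolves {V : Type*} (G : SimpleGraph V) (W : Set V) : Prop :=
  ∀ u v : V, (∀ w ∈ W, G.dist u w = G.dist v w) → u = v

/-- Metric dimension: minimum cardinality of a (finite) resolving set. -/
noncomputable def metricDim {V : Type*} (G : SimpleGraph V) : ℕ :=
  sInf {k | ∃ W : Set V, W.Finite ∧ W.ncard = k ∧ Resolves G W}
/-- `K_{m,m}` minus the Hamiltonian cycle `x₁ y₁ x₂ y₂ … x_m y_m x₁` (0-indexed:
cycle edges are `xᵢ yᵢ` and `yᵢ x_{i+1 mod m}`). -/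
def cycGraph (m : ℕ) : SimpleGraph (Fin m ⊕ Fin m) where
  Adj u v := match u, v with
    | Sum.inl i, Sum.inr j => j ≠ i ∧ (i : ℕ) ≠ ((j : ℕ) + 1) % m
    | Sum.inr j, Sum.inl i => j ≠ i ∧ (i : ℕ) ≠ ((j : ℕ) + 1) % m
    | _, _ => False
  symm := ⟨by rintro (i|i) (j|j) h <;> exact h⟩
  loopless := ⟨by rintro (i|i) h <;> exact h⟩

/-- Position `k` (taken mod `2m`) along the Hamiltonian cycle
`x₁ y₁ x₂ y₂ …`: even positions `2i ↦ xᵢ`, odd positions `2i+1 ↦ yᵢ`. -/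
def cyc (m : ℕ) [NeZero m] (k : ℕ) : Fin m ⊕ Fin m :=
  if (k % (2 * m)) % 2 = 0 then
    Sum.inl ⟨k % (2 * m) / 2, by
      have hm : 0 < m := Nat.pos_of_ne_zero (NeZero.ne m)
      have h : k % (2 * m) < 2 * m := Nat.mod_lt _ (by omega)
      exact Nat.div_lt_of_lt_mul (by omega)⟩
  else
    Sum.inr ⟨k % (2 * m) / 2, by
      have hm : 0 < m := Nat.pos_of_ne_zero (NeZero.ne m)
      have h : k % (2 * m) < 2 * m := Nat.mod_lt _ (by omega)
      exact Nat.div_lt_of_lt_mul (by omega)⟩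

/-- `W` has a gap of exactly `L` vertices starting at cycle position `s`:
the positions `s` and `s+L+1` are in `W` and the `L` positions strictly between are not. -/
def IsGap (m : ℕ) [NeZero m] (W : Set (Fin m ⊕ Fin m)) (s L : ℕ) : Prop :=
  cyc m s ∈ W ∧ cyc m (s + L + 1) ∈ W ∧ ∀ t, 1 ≤ t → t ≤ L → cyc m (s + t) ∉ W

namespace SimpleGraph

lemma dist_eq_two_of_mem_commonNeighbors {V : Type*} {G : SimpleGraph V} {u v w : V}
    (huv : u ≠ v) (hadj : ¬ G.Adj u v) (hw : w ∈ G.commonNeighbors u v) : G.dist u v = 2 := by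
  rw [dist, G.edist_eq_two_iff.mpr ⟨huv, hadj, w, hw⟩]
  rfl

end SimpleGraph

open SimpleGraph

section cycle

variable {m : ℕ} [NeZero m]

def cycSucc : Fin m ⊕ Fin m → Fin m ⊕ Fin m
  | .inl i => .inr i
  | .inr i => .inl (i + 1)

lemma cyc_of_mod_eq_even {k i : ℕ} (hi : i < m) (h : k % (2 * m) = 2 * i) :
    cyc m k = .inl ⟨i, hi⟩ := by
  simp [cyc, h]

lemma cyc_of_mod_eq_odd {k i : ℕ} (hi : i < m) (h : k % (2 * m) = 2 * i + 1) :
    cyc m k = .inr ⟨i, hi⟩ := by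
  simp only [cyc, h, Nat.mul_add_mod_self_left, Nat.mod_succ, one_ne_zero, ↓reduceIte,
    Sum.inr.injEq, Fin.mk.injEq]
  omega

lemma cyc_succ (k : ℕ) : cyc m (k + 1) = cycSucc (cyc m k) := by
  have hm : 0 < m := NeZero.pos m
  have hk : k % (2 * m) < 2 * m := Nat.mod_lt _ (by omega)
  have hsucc : (k + 1) % (2 * m) = (k % (2 * m) + 1) % (2 * m) := (Nat.mod_add_mod ..).symm
  obtain ⟨i, hi | hi⟩ := Nat.even_or_odd' (k % (2 * m))
  · rw [cyc_of_mod_eq_even (by omega) hi,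
      cyc_of_mod_eq_odd (i := i) (by omega) (by rw [hsucc, hi, Nat.mod_eq_of_lt (by omega)])]
    rfl
  · rw [cyc_of_mod_eq_odd (by omega) hi, cyc_of_mod_eq_even (Nat.mod_lt (i + 1) hm)
      (by rw [hsucc, hi, ← Nat.mul_mod_mul_left]; ring_nf)]
    simp [cycSucc, Fin.ext_iff, Fin.val_add]

lemma cyc_add (k t : ℕ) : cyc m (k + t) = cycSucc^[t] (cyc m k) := by
  induction t with
  | zero => rfl
  | succ t ih => rw [← add_assoc, cyc_succ, ih, Function.iterate_succ_apply']

end cycle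

namespace cycGraph

variable {m : ℕ} [NeZero m]

lemma adj_inl_inr {i j : Fin m} : (cycGraph m).Adj (.inl i) (.inr j) ↔ j ≠ i ∧ i ≠ j + 1 := by
  change j ≠ i ∧ (i : ℕ) ≠ ((j : ℕ) + 1) % m ↔ _
  refine and_congr_right' (not_congr ?_)
  rw [Fin.ext_iff, Fin.val_add, Fin.val_one', Nat.add_mod_mod]

lemma adj_inr_inl {i j : Fin m} : (cycGraph m).Adj (.inr j) (.inl i) ↔ j ≠ i ∧ i ≠ j + 1 :=
  (cycGraph m).adj_comm _ _ |>.trans adj_inl_inr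

lemma dist_inl_inl (hm : 5 ≤ m) {i j : Fin m} (hij : i ≠ j) :
    (cycGraph m).dist (.inl i) (.inl j) = 2 := by
  obtain ⟨k, -, hk⟩ := Finset.exists_mem_notMem_of_card_lt_card
    (s := {i, j, i - 1, j - 1}) (t := Finset.univ)
    (Finset.card_le_four.trans_lt (by rw [Finset.card_univ, Fintype.card_fin]; omega))
  simp only [Finset.mem_insert, Finset.mem_singleton, not_or] at hk
  refine dist_eq_two_of_mem_commonNeighbors (w := .inr k) (by simpa) id ⟨?_, ?_⟩
  · exact adj_inl_inr.mpr ⟨hk.1, fun h => hk.2.2.1 (eq_sub_iff_add_eq.mpr h.symm)⟩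
  · exact adj_inl_inr.mpr ⟨hk.2.1, fun h => hk.2.2.2 (eq_sub_iff_add_eq.mpr h.symm)⟩

lemma dist_inr_inr (hm : 5 ≤ m) {i j : Fin m} (hij : i ≠ j) :
    (cycGraph m).dist (.inr i) (.inr j) = 2 := by
  obtain ⟨k, -, hk⟩ := Finset.exists_mem_notMem_of_card_lt_card
    (s := {i, j, i + 1, j + 1}) (t := Finset.univ)
    (Finset.card_le_four.trans_lt (by rw [Finset.card_univ, Fintype.card_fin]; omega))
  simp only [Finset.mem_insert, Finset.mem_singleton, not_or] at hk
  refine dist_eq_two_of_mem_commonNeighbors (w := .inl k) (by simpa) id ⟨?_, ?_⟩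
  · exact adj_inr_inl.mpr ⟨Ne.symm hk.1, hk.2.2.1⟩
  · exact adj_inr_inl.mpr ⟨Ne.symm hk.2.1, hk.2.2.2⟩

lemma dist_cycSucc_eq_dist_iterate_three (hm : 5 ≤ m) {v w : Fin m ⊕ Fin m}
    (hw : ∀ t < 5, cycSucc^[t] v ≠ w) :
    (cycGraph m).dist (cycSucc v) w = (cycGraph m).dist (cycSucc^[3] v) w := by
  have h0 := hw 0 (by norm_num)
  have h1 := hw 1 (by norm_num)
  have h2 := hw 2 (by norm_num)
  have h3 := hw 3 (by norm_num)
  have h4 := hw 4 (by norm_num)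
  rcases v with i | i <;> rcases w with k | k <;>
    simp only [Function.iterate_succ_apply', Function.iterate_zero_apply, cycSucc, ne_eq,
      Sum.inl.injEq, Sum.inr.injEq, reduceCtorEq, not_false_eq_true] at h0 h1 h2 h3 h4 ⊢
  · rw [dist_eq_one_iff_adj.mpr (adj_inr_inl.mpr ⟨h0, Ne.symm h2⟩),
      dist_eq_one_iff_adj.mpr (adj_inr_inl.mpr ⟨h2, Ne.symm h4⟩)]
  · rw [dist_inr_inr hm h1, dist_inr_inr hm h3]
  · rw [dist_inl_inl hm h1, dist_inl_inl hm h3]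
  · rw [dist_eq_one_iff_adj.mpr (adj_inl_inr.mpr ⟨Ne.symm h2, mt add_right_cancel h0⟩),
      dist_eq_one_iff_adj.mpr (adj_inl_inr.mpr ⟨Ne.symm h4, mt add_right_cancel h2⟩)]

lemma cycSucc_ne_iterate_three (hm : 2 ≤ m) (v : Fin m ⊕ Fin m) :
    cycSucc v ≠ cycSucc^[3] v := by
  have h : ∀ i : Fin m, i ≠ i + 1 := fun i h => by
    simpa [Fin.ext_iff, Fin.val_one', Nat.mod_eq_of_lt (show 1 < m by omega)] using
      add_eq_left.mp h.symm
  rcases v with i | i <;> simp [cycSucc, h]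

lemma not_resolves_of_iterate_notMem (hm : 5 ≤ m) {W : Set (Fin m ⊕ Fin m)}
    (v : Fin m ⊕ Fin m) (hv : ∀ t < 5, cycSucc^[t] v ∉ W) : ¬ Resolves (cycGraph m) W :=
  fun hW => cycSucc_ne_iterate_three (by omega) v <| hW _ _ fun w hw =>
    dist_cycSucc_eq_dist_iterate_three hm fun t ht h => hv t ht (h ▸ hw)

end cycGraph

/-- for `m ≥ 5`, every gap of a resolving set of
`K_{m,m} \ E(C_{2m})` contains at most four vertices. -/
theorem stmt7 (m : ℕ) [NeZero m] (hm : 5 ≤ m) (W : Set (Fin m ⊕ Fin m))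
    (hW : Resolves (cycGraph m) W) (s L : ℕ) (hg : IsGap m W s L) : L ≤ 4 := by
  by_contra! hL
  obtain ⟨-, -, hgap⟩ := hg
  refine cycGraph.not_resolves_of_iterate_notMem hm (cyc m (s + 1)) (fun t ht => ?_) hW
  rw [← cyc_add, add_assoc, add_comm 1]
  exact hgap (t + 1) (by omega) (by omega)
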